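/- arXiv:1204.2050 — 4 statements merged into one kernel-verified Lean document; each statement's English description precedes it below -/
import Mathlib

section
/- Let D ≥ 1 and K ≥ 1 be integers, set s = (D+1)/2, and let c : ℤ^D → ℝ satisfy 0 ≤ c_k ≤ (2π)^{-D/2} for every multi-index k ∈ ℤ^D. Then the truncation error ε_K defined by ε_K² = Σ_{k ∉ [-K,K]^D} c_k² / (1 + (2π‖k‖₂)²)^s satisfies ε_K² < √(8/π³) · √D · π^{-2D} · K^{-1}; in particular ε_K < E(D)/√K where E(D) = (2/π)^{3/4} D^{1/4} π^{-D}. -/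
/-!
Since `0 ≤ c k ≤ (2π)^(-D/2)` and `‖k‖₂ ≥ |k d|` for every coordinate `d`, each term is at most
`(2π)^(-(2D+1)) / |k d|^(D+1)`. Charge every `k` outside the box to a coordinate `d` of maximal
modulus `m = |k d| > K`: the other coordinates lie in `[-m, m]`, so at most
`(2m+1)^(D-1) ≤ (3m)^(D-1)` points are charged to `(d, k d)`, and the contribution of `(d, k d)` is at most
`3^(D-1) (2π)^(-(2D+1)) / m²`. Summing over the `D` coordinates, the two signs of `k d` and
`m > K`, where `∑_{m>K} m⁻² ≤ 1/K`, gives `ε_K² ≤ 2 D 3^(D-1) / ((2π)^(2D+1) K)`, and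
`D 3^(D-1) ≤ 4^D` brings this below `1 / (π^(2D+1) K)`, which is smaller than the claimed bound
because `π < 8`.
-/

open scoped ENNReal
open Finset Real

lemma ENNReal.tsum_indicator_inv_sq_le (K : ℕ) :
    ∑' m : ℕ, {m | K < m}.indicator (fun m : ℕ => ((m : ℝ≥0∞) ^ 2)⁻¹) m ≤ (K : ℝ≥0∞)⁻¹ := by
  rcases K.eq_zero_or_pos with rfl | hK
  · simp
  refine ENNReal.tsum_le_of_sum_range_le fun N => ?_
  have hsub : (range N).filter (K < ·) ⊆ Ioc K (max K N) := by
    intro i hi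
    simp only [mem_filter, mem_range] at hi
    simp only [mem_Ioc]
    omega
  calc ∑ i ∈ range N, {m | K < m}.indicator (fun m : ℕ => ((m : ℝ≥0∞) ^ 2)⁻¹) i
      ≤ ∑ i ∈ Ioc K (max K N), ((i : ℝ≥0∞) ^ 2)⁻¹ := by
        rw [sum_indicator_eq_sum_filter]
        exact sum_le_sum_of_subset hsub
    _ = ENNReal.ofReal (∑ i ∈ Ioc K (max K N), ((i : ℝ) ^ 2)⁻¹) := by
        rw [ENNReal.ofReal_sum_of_nonneg fun i _ => by positivity]
        refine sum_congr rfl fun i hi => ?_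
        have hi : (0 : ℝ) < i := by
          simp only [mem_Ioc] at hi; exact_mod_cast (by omega : 0 < i)
        rw [ENNReal.ofReal_inv_of_pos (by positivity), ENNReal.ofReal_pow hi.le,
          ENNReal.ofReal_natCast]
    _ ≤ ENNReal.ofReal (K : ℝ)⁻¹ :=
        ENNReal.ofReal_le_ofReal <| (sum_Ioc_inv_sq_le_sub hK.ne' (le_max_left _ _)).trans
          (sub_le_self _ (by positivity))
    _ = (K : ℝ≥0∞)⁻¹ := by
        rw [ENNReal.ofReal_inv_of_pos (by exact_mod_cast hK), ENNReal.ofReal_natCast]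

lemma ENNReal.tsum_int_comp_natAbs_le (g : ℕ → ℝ≥0∞) :
    ∑' m : ℤ, g m.natAbs ≤ 2 * ∑' n : ℕ, g n := by
  have hnat : ∑' n : ℕ, g n = g 0 + ∑' n : ℕ, g (n + 1) := tsum_eq_zero_add' ENNReal.summable
  have hpos : ∀ n : ℕ, ((n : ℤ) + 1).natAbs = n + 1 := fun n => by omega
  have hneg : ∀ n : ℕ, (-((n : ℤ) + 1)).natAbs = n + 1 := fun n => by omega
  rw [tsum_of_add_one_of_neg_add_one ENNReal.summable ENNReal.summable, hnat]
  simp only [hpos, hneg, Int.natAbs_zero, two_mul]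
  rw [add_comm (∑' n : ℕ, g (n + 1)) (g 0)]
  gcongr
  exact le_add_self

lemma ENNReal.two_mul_add_one_pow_mul_div_pow_le (n m : ℕ) (hm : m ≠ 0) (C : ℝ≥0∞) :
    (2 * m + 1 : ℝ≥0∞) ^ n * (C / m ^ (n + 2)) ≤ 3 ^ n * C * ((m : ℝ≥0∞) ^ 2)⁻¹ := by
  have h3m : (2 * m + 1 : ℝ≥0∞) ≤ 3 * m := by exact_mod_cast (by omega : 2 * m + 1 ≤ 3 * m)
  have hm0 : (m : ℝ≥0∞) ^ n ≠ 0 := pow_ne_zero _ (by exact_mod_cast hm)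
  have hmt : (m : ℝ≥0∞) ^ n ≠ ⊤ := ENNReal.pow_ne_top (ENNReal.natCast_ne_top m)
  calc (2 * m + 1 : ℝ≥0∞) ^ n * (C / m ^ (n + 2))
      ≤ (3 * m) ^ n * (C / m ^ (n + 2)) := by gcongr
    _ = 3 ^ n * C * ((m : ℝ≥0∞) ^ n * ((m : ℝ≥0∞) ^ n)⁻¹) * ((m : ℝ≥0∞) ^ 2)⁻¹ := by
        rw [div_eq_mul_inv, pow_add, ENNReal.mul_inv (.inl hm0) (.inl hmt), mul_pow]
        ring
    _ = 3 ^ n * C * ((m : ℝ≥0∞) ^ 2)⁻¹ := by rw [ENNReal.mul_inv_cancel hm0 hmt, mul_one]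

lemma ENNReal.tsum_int_pow_mul_indicator_div_pow_le (n K : ℕ) (C : ℝ≥0∞) :
    ∑' m : ℤ, (2 * m.natAbs + 1) ^ n * {m | K < m}.indicator (fun m => C / m ^ (n + 2)) m.natAbs
      ≤ 2 * (3 ^ n * C * (K : ℝ≥0∞)⁻¹) := by
  calc _ ≤ 2 * ∑' m : ℕ, (2 * m + 1) ^ n * {m | K < m}.indicator (fun m => C / m ^ (n + 2)) m := by
        simpa using ENNReal.tsum_int_comp_natAbs_le fun m =>
          (2 * m + 1) ^ n * {m | K < m}.indicator (fun m => C / m ^ (n + 2)) m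
    _ ≤ 2 * ∑' m : ℕ, 3 ^ n * C * {m | K < m}.indicator (fun m : ℕ => ((m : ℝ≥0∞) ^ 2)⁻¹) m := by
        gcongr 2 * ?_
        refine ENNReal.tsum_le_tsum fun m => ?_
        by_cases hm : K < m
        · simp only [Set.indicator_of_mem (show m ∈ {m | K < m} from hm)]
          exact ENNReal.two_mul_add_one_pow_mul_div_pow_le n m (by omega) C
        · simp [Set.indicator_of_notMem (show m ∉ {m | K < m} from hm)]
    _ ≤ 2 * (3 ^ n * C * (K : ℝ≥0∞)⁻¹) := by
        rw [ENNReal.tsum_mul_left]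
        gcongr
        exact ENNReal.tsum_indicator_inv_sq_le K

lemma card_piFinset_Icc_neg (n a : ℕ) :
    #(Fintype.piFinset fun _ : Fin n => Icc (-(a : ℤ)) a) = (2 * a + 1) ^ n := by
  rw [Fintype.card_piFinset, prod_const, card_univ, Fintype.card_fin, Int.card_Icc]
  congr 1
  omega

lemma ENNReal.tsum_indicator_natAbs_le_coord_le {n : ℕ} (d : Fin (n + 1))
    (F : (Fin (n + 1) → ℤ) → ℝ≥0∞) (g : ℕ → ℝ≥0∞)
    (hF : ∀ k, (∀ j, (k j).natAbs ≤ (k d).natAbs) → F k ≤ g (k d).natAbs) :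
    ∑' k, {k | ∀ j, (k j).natAbs ≤ (k d).natAbs}.indicator F k
      ≤ ∑' m : ℤ, (2 * m.natAbs + 1) ^ n * g m.natAbs := by
  set T : Set (Fin (n + 1) → ℤ) := {k | ∀ j, (k j).natAbs ≤ (k d).natAbs}
  let e := Fin.insertNthEquiv (fun _ => ℤ) d
  rw [← e.tsum_eq, ENNReal.tsum_prod']
  refine ENNReal.tsum_le_tsum fun m => ?_
  have he : ∀ k', e (m, k') d = m := fun k' => by simp [e, Fin.insertNthEquiv]
  have he' : ∀ k' i, e (m, k') (d.succAbove i) = k' i := fun k' i => by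
    simp [e, Fin.insertNthEquiv]
  let box := Fintype.piFinset fun _ : Fin n => Icc (-(m.natAbs : ℤ)) m.natAbs
  have hsupp : ∀ k' ∉ box, T.indicator F (e (m, k')) = 0 := by
    intro k' hk'
    refine Set.indicator_of_notMem (fun hmem => hk' ?_) _
    simp only [box, Fintype.mem_piFinset, mem_Icc]
    intro i
    have := hmem (d.succAbove i)
    rw [he, he'] at this
    omega
  calc ∑' k', T.indicator F (e (m, k')) = ∑ k' ∈ box, T.indicator F (e (m, k')) :=
        tsum_eq_sum hsupp
    _ ≤ ∑ _k' ∈ box, g m.natAbs := sum_le_sum fun k' _ =>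
        (Set.indicator_le (g := fun k => g (k d).natAbs) hF _).trans_eq (by dsimp only; rw [he])
    _ = (2 * m.natAbs + 1) ^ n * g m.natAbs := by
        rw [sum_const, card_piFinset_Icc_neg, nsmul_eq_mul]
        push_cast
        rfl

lemma ENNReal.tsum_tail_le_of_le_div_pow (n K : ℕ) (F : (Fin (n + 1) → ℤ) → ℝ≥0∞) (C : ℝ≥0∞)
    (hF : ∀ k d, (K : ℤ) < |k d| → F k ≤ C / (k d).natAbs ^ (n + 2)) :
    ∑' k : {k : Fin (n + 1) → ℤ // ∃ d, (K : ℤ) < |k d|}, F k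
      ≤ 2 * (n + 1) * 3 ^ n * C / K := by
  set S : Set (Fin (n + 1) → ℤ) := {k | ∃ d, (K : ℤ) < |k d|}
  set T : Fin (n + 1) → Set (Fin (n + 1) → ℤ) := fun d => {k | ∀ j, (k j).natAbs ≤ (k d).natAbs}
  have hcover : ∀ k, S.indicator F k ≤ ∑ d, (T d).indicator (S.indicator F) k := by
    intro k
    obtain ⟨d, hd⟩ := Finite.exists_max fun j => (k j).natAbs
    calc S.indicator F k = (T d).indicator (S.indicator F) k :=
          (Set.indicator_of_mem (show k ∈ T d from hd) _).symm
      _ ≤ _ := single_le_sum (f := fun d => (T d).indicator (S.indicator F) k)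
          (fun _ _ => zero_le) (mem_univ d)
  have hslice : ∀ d, ∑' k, (T d).indicator (S.indicator F) k
      ≤ 2 * (3 ^ n * C * (K : ℝ≥0∞)⁻¹) := by
    refine fun d => (ENNReal.tsum_indicator_natAbs_le_coord_le d _ _ fun k hk => ?_).trans
      (ENNReal.tsum_int_pow_mul_indicator_div_pow_le n K C)
    by_cases hkS : k ∈ S
    · obtain ⟨j, hj⟩ := id hkS
      have hKd : K < (k d).natAbs := by rw [Int.abs_eq_natAbs] at hj; have := hk j; omega
      rw [Set.indicator_of_mem hkS, Set.indicator_of_mem (show _ ∈ {m | K < m} from hKd)]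
      exact hF k d (by rw [Int.abs_eq_natAbs]; exact_mod_cast hKd)
    · simp [Set.indicator_of_notMem hkS]
  calc ∑' k : {k : Fin (n + 1) → ℤ // ∃ d, (K : ℤ) < |k d|}, F k
      = ∑' k, S.indicator F k := tsum_subtype S F
    _ ≤ ∑' k, ∑ d, (T d).indicator (S.indicator F) k := ENNReal.tsum_le_tsum hcover
    _ = ∑ d, ∑' k, (T d).indicator (S.indicator F) k :=
        Summable.tsum_finsetSum fun _ _ => ENNReal.summable
    _ ≤ ∑ _d : Fin (n + 1), 2 * (3 ^ n * C * (K : ℝ≥0∞)⁻¹) := sum_le_sum fun d _ => hslice d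
    _ = 2 * (n + 1) * 3 ^ n * C / K := by
        rw [sum_const, card_univ, Fintype.card_fin, nsmul_eq_mul, div_eq_mul_inv]
        push_cast
        ring

lemma tsum_le_of_tsum_ofReal_le {α : Type*} {f : α → ℝ} (hf : ∀ a, 0 ≤ f a) {M : ℝ}
    (hM : 0 ≤ M) (h : ∑' a, ENNReal.ofReal (f a) ≤ ENNReal.ofReal M) : ∑' a, f a ≤ M := by
  have := ENNReal.toReal_le_of_le_ofReal hM h
  rwa [ENNReal.tsum_toReal_eq fun _ => ENNReal.ofReal_ne_top,
    tsum_congr fun a => ENNReal.toReal_ofReal (hf a)] at this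

lemma sq_div_one_add_mul_sq_rpow_le {a b r t : ℝ} (D : ℕ) (hb : 0 < b) (ha0 : 0 ≤ a)
    (ha : a ≤ b ^ (-(D : ℝ) / 2)) (ht : 0 < t) (htr : t ≤ r) :
    a ^ 2 / (1 + (b * r) ^ 2) ^ (((D : ℝ) + 1) / 2) ≤ (b ^ (2 * D + 1))⁻¹ / t ^ (D + 1) := by
  have hnum : a ^ 2 ≤ (b ^ D)⁻¹ := by
    calc a ^ 2 ≤ (b ^ (-(D : ℝ) / 2)) ^ 2 := pow_le_pow_left₀ ha0 ha 2
      _ = (b ^ D)⁻¹ := by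
        rw [← rpow_mul_natCast hb.le, show -(D : ℝ) / 2 * (2 : ℕ) = -D by push_cast; ring,
          rpow_neg hb.le, rpow_natCast]
  have hden : (b * t) ^ (D + 1) ≤ (1 + (b * r) ^ 2) ^ (((D : ℝ) + 1) / 2) := by
    have hsq : (b * t) ^ 2 ≤ 1 + (b * r) ^ 2 := by
      have := pow_le_pow_left₀ (by positivity) (mul_le_mul_of_nonneg_left htr hb.le) 2
      linarith
    calc (b * t) ^ (D + 1) = ((b * t) ^ 2) ^ (((D : ℝ) + 1) / 2) := by
          rw [← rpow_natCast _ 2, ← rpow_mul (by positivity), ← rpow_natCast]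
          push_cast
          ring_nf
      _ ≤ _ := rpow_le_rpow (by positivity) hsq (by positivity)
  calc a ^ 2 / (1 + (b * r) ^ 2) ^ (((D : ℝ) + 1) / 2) ≤ (b ^ D)⁻¹ / (b * t) ^ (D + 1) :=
        div_le_div₀ (by positivity) hnum (by positivity) hden
    _ = (b ^ (2 * D + 1))⁻¹ / t ^ (D + 1) := by
        rw [mul_pow, show 2 * D + 1 = D + (D + 1) by ring, pow_add]
        field_simp
        ring

lemma tsum_tail_sq_div_one_add_sq_rpow_le (n K : ℕ) (hK : 0 < K) {b : ℝ} (hb : 0 < b)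
    (c : (Fin (n + 1) → ℤ) → ℝ) (hc0 : ∀ k, 0 ≤ c k)
    (hc1 : ∀ k, c k ≤ b ^ (-((n + 1 : ℕ) : ℝ) / 2)) :
    ∑' k : {k : Fin (n + 1) → ℤ // ∃ d, (K : ℤ) < |k d|},
        c k.1 ^ 2 / (1 + (b * √(∑ d, (k.1 d : ℝ) ^ 2)) ^ 2) ^ ((((n + 1 : ℕ) : ℝ) + 1) / 2)
      ≤ 2 * (n + 1) * 3 ^ n / b ^ (2 * (n + 1) + 1) / K := by
  set term : (Fin (n + 1) → ℤ) → ℝ := fun k =>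
    c k ^ 2 / (1 + (b * √(∑ d, (k d : ℝ) ^ 2)) ^ 2) ^ ((((n + 1 : ℕ) : ℝ) + 1) / 2)
  have hF : ∀ k d, (K : ℤ) < |k d| → ENNReal.ofReal (term k)
      ≤ ENNReal.ofReal (b ^ (2 * (n + 1) + 1))⁻¹ / (k d).natAbs ^ (n + 2) := by
    intro k d hkd
    have ht : (0 : ℝ) < (k d).natAbs := by
      rw [Int.abs_eq_natAbs] at hkd; exact_mod_cast (by omega : 0 < (k d).natAbs)
    have htr : ((k d).natAbs : ℝ) ≤ √(∑ j, (k j : ℝ) ^ 2) := by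
      rw [Nat.cast_natAbs, Int.cast_abs]
      exact abs_le_sqrt (single_le_sum (fun j _ => sq_nonneg (k j : ℝ)) (mem_univ d))
    rw [← ENNReal.ofReal_natCast, ← ENNReal.ofReal_pow ht.le,
      ← ENNReal.ofReal_div_of_pos (by positivity)]
    exact ENNReal.ofReal_le_ofReal
      (sq_div_one_add_mul_sq_rpow_le (n + 1) hb (hc0 k) (hc1 k) ht htr)
  refine tsum_le_of_tsum_ofReal_le (fun k => by positivity) (by positivity)
    ((ENNReal.tsum_tail_le_of_le_div_pow n K _ _ hF).trans_eq ?_)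
  rw [ENNReal.ofReal_div_of_pos (by exact_mod_cast hK), ENNReal.ofReal_div_of_pos (by positivity),
    ENNReal.ofReal_inv_of_pos (by positivity), ENNReal.ofReal_natCast,
    show (2 * (n + 1) * 3 ^ n : ℝ) = ((2 * (n + 1) * 3 ^ n : ℕ) : ℝ) by push_cast; ring,
    ENNReal.ofReal_natCast, div_eq_mul_inv, div_eq_mul_inv]
  push_cast
  rfl

lemma add_three_mul_three_pow_le (n : ℕ) : (n + 3) * 3 ^ n ≤ 3 * 4 ^ n := by
  induction n with
  | zero => norm_num
  | succ n ih => rw [pow_succ, pow_succ 4]; nlinarith [Nat.one_le_pow n 3 (by norm_num)]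

lemma two_mul_succ_mul_three_pow_div_lt (n K : ℕ) (hK : 0 < K) :
    2 * (n + 1) * 3 ^ n / (2 * π) ^ (2 * (n + 1) + 1) / K
      < √(8 / π ^ 3) * √((n + 1 : ℕ) : ℝ) / (π ^ (2 * (n + 1)) * K) := by
  have hcount : ((n : ℝ) + 3) * 3 ^ n ≤ 3 * 4 ^ n := by
    exact_mod_cast add_three_mul_three_pow_le n
  have hpi : 1 / π < √(8 / π ^ 3 * ((n + 1 : ℕ) : ℝ)) := by
    rw [lt_sqrt (by positivity), div_pow, one_pow, div_lt_iff₀ (by positivity)]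
    push_cast
    field_simp
    nlinarith [pi_lt_four, pi_pos]
  calc 2 * (n + 1) * 3 ^ n / (2 * π) ^ (2 * (n + 1) + 1) / K
      ≤ 1 / π ^ (2 * (n + 1) + 1) / K := by
        gcongr ?_ / _
        rw [mul_pow, ← div_div, div_le_div_iff_of_pos_right (by positivity),
          div_le_one (by positivity), pow_succ, pow_mul]
        norm_num
        nlinarith [pow_succ (4 : ℝ) n, pow_pos (three_pos : (0 : ℝ) < 3) n]
    _ = 1 / π / (π ^ (2 * (n + 1)) * K) := by rw [pow_succ]; field_simp
    _ < √(8 / π ^ 3) * √((n + 1 : ℕ) : ℝ) / (π ^ (2 * (n + 1)) * K) := by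
        rw [← sqrt_mul (by positivity)]
        gcongr

lemma sq_rpow_div_sqrt (D K : ℕ) :
    ((2 / π) ^ ((3 : ℝ) / 4) * (D : ℝ) ^ ((1 : ℝ) / 4) / π ^ D / √K) ^ 2
      = √(8 / π ^ 3) * √D / (π ^ (2 * D) * K) := by
  have h2pi : (0 : ℝ) ≤ 2 / π := by positivity
  rw [div_pow, div_pow, mul_pow, ← rpow_mul_natCast h2pi, ← rpow_mul_natCast (Nat.cast_nonneg D),
    sq_sqrt (Nat.cast_nonneg K), ← pow_mul, sqrt_eq_rpow, sqrt_eq_rpow,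
    show (8 : ℝ) / π ^ 3 = (2 / π) ^ (3 : ℝ) by rw [div_rpow zero_le_two pi_pos.le]; norm_num,
    ← rpow_mul h2pi]
  norm_num
  ring

/-- truncation error bound for the finite-wavenumber approximation of the
`H^{-s}` norm, with `s = (D+1)/2`, coefficients `0 ≤ c k ≤ (2π)^{-D/2}`. -/
theorem truncation_error_bound (D K : ℕ) (hD : 1 ≤ D) (hK : 1 ≤ K)
    (c : (Fin D → ℤ) → ℝ)
    (hc0 : ∀ k, 0 ≤ c k) (hc1 : ∀ k, c k ≤ (2 * Real.pi) ^ (-(D : ℝ) / 2)) :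
    (∑' k : {k : Fin D → ℤ // ∃ d, (K : ℤ) < |k d|},
        (c k.1) ^ 2 /
          (1 + (2 * Real.pi * Real.sqrt (∑ d, ((k.1 d : ℝ)) ^ 2)) ^ 2) ^ (((D : ℝ) + 1) / 2))
      < Real.sqrt (8 / Real.pi ^ 3) * Real.sqrt D / (Real.pi ^ (2 * D) * K) ∧
    Real.sqrt (∑' k : {k : Fin D → ℤ // ∃ d, (K : ℤ) < |k d|},
        (c k.1) ^ 2 /
          (1 + (2 * Real.pi * Real.sqrt (∑ d, ((k.1 d : ℝ)) ^ 2)) ^ 2) ^ (((D : ℝ) + 1) / 2))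
      < (2 / Real.pi) ^ ((3 : ℝ) / 4) * (D : ℝ) ^ ((1 : ℝ) / 4) / Real.pi ^ D / Real.sqrt K := by
  obtain ⟨n, rfl⟩ : ∃ n, D = n + 1 := ⟨D - 1, by omega⟩
  have hbound := (tsum_tail_sq_div_one_add_sq_rpow_le n K hK two_pi_pos c hc0 hc1).trans_lt
    (two_mul_succ_mul_three_pow_div_lt n K hK)
  refine ⟨hbound, ?_⟩
  rw [sqrt_lt' (by positivity), sq_rpow_div_sqrt]
  exact hbound
end

section
/- For every integer D ≥ 1, the central binomial coefficient satisfies C(D, ⌊D/2⌋) < √(8/π) · 2^D / √(D+1). -/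
lemma centralBinom_sq_le (n : ℕ) :
    (Nat.centralBinom n) ^ 2 * (2 * n + 1) ≤ 16 ^ n := by
  induction n with
  | zero => simp [Nat.centralBinom]
  | succ n ih =>
    have key : (n + 1) * Nat.centralBinom (n + 1) = 2 * (2 * n + 1) * Nat.centralBinom n :=
      Nat.succ_mul_centralBinom_succ n
    have h1 : ((n + 1) * Nat.centralBinom (n + 1)) ^ 2 * (2 * (n + 1) + 1)
        ≤ (n + 1) ^ 2 * 16 ^ (n + 1) := by
      rw [key]
      have h2 : (2 * (2 * n + 1) * Nat.centralBinom n) ^ 2 * (2 * (n + 1) + 1)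
          = (4 * (2 * n + 1) * (2 * n + 3)) * ((Nat.centralBinom n) ^ 2 * (2 * n + 1)) := by
        ring
      rw [h2]
      calc (4 * (2 * n + 1) * (2 * n + 3)) * ((Nat.centralBinom n) ^ 2 * (2 * n + 1))
          ≤ (4 * (2 * n + 1) * (2 * n + 3)) * 16 ^ n := Nat.mul_le_mul_left _ ih
        _ ≤ ((n + 1) ^ 2 * 16) * 16 ^ n := by
            apply Nat.mul_le_mul_right; nlinarith
        _ = (n + 1) ^ 2 * 16 ^ (n + 1) := by ring
    have h3 : ((n+1)*Nat.centralBinom (n+1))^2 * (2*(n+1)+1)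
        = (n+1)^2 * ((Nat.centralBinom (n+1))^2 * (2*(n+1)+1)) := by ring
    rw [h3] at h1
    exact Nat.le_of_mul_le_mul_left h1 (by positivity)

lemma choose_half_sq_le (D : ℕ) :
    (D.choose (D / 2)) ^ 2 * (D + 1) ≤ 4 ^ D := by
  rcases Nat.even_or_odd D with ⟨n, hn⟩ | ⟨n, hn⟩
  · subst hn
    have h : (n + n) / 2 = n := by omega
    rw [h]
    have : (n + n).choose n = Nat.centralBinom n := by
      rw [Nat.centralBinom_eq_two_mul_choose]; ring_nf
    rw [this]
    calc (Nat.centralBinom n) ^ 2 * (n + n + 1)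
        = (Nat.centralBinom n) ^ 2 * (2 * n + 1) := by ring_nf
      _ ≤ 16 ^ n := centralBinom_sq_le n
      _ = 4 ^ (n + n) := by rw [pow_add, ← mul_pow]; norm_num
  · subst hn
    have h : (2 * n + 1) / 2 = n := by omega
    rw [h]
    have hdouble : 2 * (2 * n + 1).choose n = Nat.centralBinom (n + 1) := by
      rw [Nat.centralBinom_eq_two_mul_choose]
      have h2 : 2 * (n + 1) = 2 * n + 1 + 1 := by ring
      rw [h2, Nat.choose_succ_succ, Nat.choose_symm_half]
      ring
    have key := centralBinom_sq_le (n + 1)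
    rw [← hdouble] at key
    have h16 : (16:ℕ) ^ (n + 1) = 4 * 4 ^ (2 * n + 1) := by
      calc (16:ℕ) ^ (n+1) = (4^2) ^ (n+1) := by rw [show (16:ℕ) = 4^2 from rfl]
        _ = 4 ^ (2 * (n+1)) := by rw [← pow_mul]
        _ = 4 ^ ((2*n+1) + 1) := by rw [show 2*(n+1) = (2*n+1)+1 from by ring]
        _ = 4 * 4 ^ (2*n+1) := by rw [pow_succ]; ring
    nlinarith
lemma choose_half_le_real (D : ℕ) :
    (Nat.choose D (D / 2) : ℝ) ≤ 2 ^ D / Real.sqrt ((D : ℝ) + 1) := by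
  have hnat := choose_half_sq_le D
  have hreal : ((D.choose (D / 2) : ℝ)) ^ 2 * ((D : ℝ) + 1) ≤ (4 : ℝ) ^ D := by
    have := (Nat.cast_le (α := ℝ)).mpr hnat
    push_cast at this
    exact_mod_cast this
  have hpos : (0 : ℝ) < Real.sqrt ((D : ℝ) + 1) := Real.sqrt_pos.mpr (by positivity)
  rw [le_div_iff₀ hpos]
  calc (D.choose (D / 2) : ℝ) * Real.sqrt ((D : ℝ) + 1)
      = Real.sqrt (((D.choose (D / 2) : ℝ)) ^ 2 * ((D : ℝ) + 1)) := by
        rw [Real.sqrt_mul (by positivity), Real.sqrt_sq (by positivity)]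
    _ ≤ Real.sqrt ((4 : ℝ) ^ D) := Real.sqrt_le_sqrt hreal
    _ = 2 ^ D := by
        rw [show (4:ℝ)^D = ((2:ℝ)^D)^2 by rw [← pow_mul, mul_comm, pow_mul]; norm_num]
        exact Real.sqrt_sq (by positivity)

/-- the central binomial coefficient satisfies
`C(D, ⌊D/2⌋) < √(8/π) · 2^D / √(D+1)`. -/
theorem central_binomial_bound (D : ℕ) (hD : 1 ≤ D) :
    (Nat.choose D (D / 2) : ℝ)
      < Real.sqrt (8 / Real.pi) * 2 ^ D / Real.sqrt ((D : ℝ) + 1) := by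
  have key := choose_half_le_real D
  have h1 : (1:ℝ) < Real.sqrt (8 / Real.pi) := by
    rw [show (1:ℝ) = Real.sqrt 1 from (Real.sqrt_one).symm]
    apply Real.sqrt_lt_sqrt (by norm_num)
    rw [lt_div_iff₀ Real.pi_pos]
    linarith [Real.pi_lt_d2]
  have hpos : (0:ℝ) < 2 ^ D / Real.sqrt ((D : ℝ) + 1) := by
    apply div_pos (by positivity) (Real.sqrt_pos.mpr (by positivity))
  calc (Nat.choose D (D / 2) : ℝ) ≤ 2 ^ D / Real.sqrt ((D : ℝ) + 1) := key
    _ < Real.sqrt (8 / Real.pi) * (2 ^ D / Real.sqrt ((D : ℝ) + 1)) := by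
        nlinarith
    _ = Real.sqrt (8 / Real.pi) * 2 ^ D / Real.sqrt ((D : ℝ) + 1) := by ring
end

section
/- For every integer D ≥ 1, the error decay rate constant satisfies E(D)² = D · C(D, ⌊D/2⌋) · (2π)^{-D} / (4π^{D+1}) < √(8/π³) · √D / π^{2D}. -/
lemma cb_sq_bound : ∀ n : ℕ, (2 * n + 1) * (Nat.centralBinom n) ^ 2 ≤ 16 ^ n := by
  intro n
  induction n with
  | zero => simp [Nat.centralBinom]
  | succ n ih =>
    have hid := Nat.succ_mul_centralBinom_succ n
    have hsq : ((n + 1) * Nat.centralBinom (n + 1)) ^ 2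
        = (2 * (2 * n + 1) * Nat.centralBinom n) ^ 2 := by rw [hid]
    have hkey : (n + 1) ^ 2 * ((2 * (n + 1) + 1) * (Nat.centralBinom (n + 1)) ^ 2)
        ≤ (n + 1) ^ 2 * 16 ^ (n + 1) := by
      calc (n + 1) ^ 2 * ((2 * (n + 1) + 1) * (Nat.centralBinom (n + 1)) ^ 2)
          = (2 * n + 3) * ((n + 1) * Nat.centralBinom (n + 1)) ^ 2 := by ring
        _ = (2 * n + 3) * (2 * (2 * n + 1) * Nat.centralBinom n) ^ 2 := by rw [hid]
        _ = (4 * (2 * n + 3) * (2 * n + 1)) * ((2 * n + 1) * Nat.centralBinom n ^ 2) := by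
            ring
        _ ≤ (4 * (2 * n + 3) * (2 * n + 1)) * 16 ^ n := Nat.mul_le_mul_left _ ih
        _ ≤ (16 * (n + 1) ^ 2) * 16 ^ n := Nat.mul_le_mul_right _ (by nlinarith)
        _ = (n + 1) ^ 2 * 16 ^ (n + 1) := by ring
    exact Nat.le_of_mul_le_mul_left hkey (by positivity)

lemma choose_sq_bound (D : ℕ) : D * (Nat.choose D (D / 2)) ^ 2 ≤ 4 ^ D := by
  rcases Nat.even_or_odd D with ⟨n, hn⟩ | ⟨n, hn⟩
  · subst hn
    have h := cb_sq_bound n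
    have hc : Nat.choose (n + n) ((n + n) / 2) = Nat.centralBinom n := by
      rw [Nat.centralBinom_eq_two_mul_choose]
      congr 1 <;> omega
    rw [hc]
    calc (n + n) * Nat.centralBinom n ^ 2 ≤ (2 * n + 1) * Nat.centralBinom n ^ 2 := by
          apply Nat.mul_le_mul_right; omega
      _ ≤ 16 ^ n := h
      _ = 4 ^ (n + n) := by
          rw [show (16 : ℕ) = 4 ^ 2 by norm_num, ← pow_mul]
          congr 1
          omega
  · subst hn
    have h := cb_sq_bound (n + 1)
    -- choose (2n+1) n doubled is centralBinom (n+1)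
    have hdouble : 2 * Nat.choose (2 * n + 1) n = Nat.centralBinom (n + 1) := by
      rw [Nat.centralBinom_eq_two_mul_choose]
      have h1 : Nat.choose (2 * n + 1) (n + 1) = Nat.choose (2 * n + 1) n := by
        rw [show n + 1 = (2 * n + 1) - n by omega]
        exact Nat.choose_symm (by omega)
      rw [show 2 * (n + 1) = (2 * n + 1) + 1 by ring, Nat.choose_succ_succ, h1]
      omega
    have hc : (2 * n + 1) / 2 = n := by omega
    rw [hc]
    have hmul : 4 * ((2 * n + 1) * Nat.choose (2 * n + 1) n ^ 2) ≤ 4 * 4 ^ (2 * n + 1) := by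
      calc 4 * ((2 * n + 1) * Nat.choose (2 * n + 1) n ^ 2)
          = (2 * n + 1) * (2 * Nat.choose (2 * n + 1) n) ^ 2 := by ring
        _ = (2 * n + 1) * Nat.centralBinom (n + 1) ^ 2 := by rw [hdouble]
        _ ≤ (2 * (n + 1) + 1) * Nat.centralBinom (n + 1) ^ 2 := by
            apply Nat.mul_le_mul_right; omega
        _ ≤ 16 ^ (n + 1) := h
        _ = 4 * 4 ^ (2 * n + 1) := by
            rw [show (16 : ℕ) = 4 ^ 2 by norm_num, ← pow_mul]
            rw [show 2 * (n + 1) = (2 * n + 1) + 1 by omega, pow_succ]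
            ring
    exact Nat.le_of_mul_le_mul_left hmul (by norm_num)

/-- the error decay rate constant satisfies
`E(D)² = D · C(D,⌊D/2⌋) · (2π)^{-D} / (4π^{D+1}) < √(8/π³) · √D / π^{2D}`. -/
theorem decay_constant_bound (D : ℕ) (hD : 1 ≤ D) :
    (D : ℝ) * (Nat.choose D (D / 2) : ℝ) * ((2 * Real.pi) ^ D)⁻¹ / (4 * Real.pi ^ (D + 1))
      < Real.sqrt (8 / Real.pi ^ 3) * Real.sqrt D / Real.pi ^ (2 * D) := by
  set π := Real.pi with hπdef
  have hπ : 0 < π := Real.pi_pos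
  set C : ℝ := (Nat.choose D (D / 2) : ℝ) with hC
  have hCpos : 0 < C := by
    have h := Nat.choose_pos (Nat.div_le_self D 2)
    rw [hC]
    exact_mod_cast h
  have hDpos : (0 : ℝ) < D := by exact_mod_cast hD
  -- real version of the nat bound
  have hnat : (D : ℝ) * C ^ 2 ≤ 4 ^ D := by
    have := choose_sq_bound D
    calc (D : ℝ) * C ^ 2 = ((D * (Nat.choose D (D / 2)) ^ 2 : ℕ) : ℝ) := by push_cast; ring
      _ ≤ ((4 ^ D : ℕ) : ℝ) := by exact_mod_cast this
      _ = 4 ^ D := by push_cast; ring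
  -- hence √D * C ≤ 2^D
  have hsqrt : Real.sqrt D * C ≤ 2 ^ D := by
    have h1 : (Real.sqrt D * C) ^ 2 ≤ (2 ^ D) ^ 2 := by
      have : (Real.sqrt D * C) ^ 2 = (D : ℝ) * C ^ 2 := by
        rw [mul_pow, Real.sq_sqrt hDpos.le]
      rw [this, ← pow_mul, show D * 2 = 2 * D by ring, pow_mul]
      norm_num
      exact hnat
    have h2 := Real.sqrt_le_sqrt h1
    rwa [Real.sqrt_sq (by positivity), Real.sqrt_sq (by positivity)] at h2
  have hsD : (0:ℝ) < Real.sqrt D := Real.sqrt_pos.mpr hDpos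
  -- the constant factor exceeds 1
  have hone : 1 < Real.sqrt (8 / π ^ 3) * (4 * π) := by
    set s := Real.sqrt (8 / π ^ 3) with hs
    have hs0 : 0 ≤ s := Real.sqrt_nonneg _
    have hs2 : s ^ 2 = 8 / π ^ 3 := Real.sq_sqrt (by positivity)
    have hs2' : s ^ 2 * π ^ 3 = 8 := by
      rw [hs2]; field_simp
    nlinarith [Real.pi_lt_d2, Real.pi_gt_three, sq_nonneg (4 * π * s - 1),
      sq_nonneg (4 * π * s + 1), mul_pos hπ hπ]
  -- rewrite both sides over a common denominator
  have hden : (0:ℝ) < 2 ^ (D + 2) * π ^ (2 * D + 1) := by positivity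
  have hLHS : (D : ℝ) * C * ((2 * π) ^ D)⁻¹ / (4 * π ^ (D + 1))
      = ((D : ℝ) * C) / (2 ^ (D + 2) * π ^ (2 * D + 1)) := by
    rw [mul_pow]
    field_simp
    ring
  have hRHS : Real.sqrt (8 / π ^ 3) * Real.sqrt D / π ^ (2 * D)
      = (Real.sqrt (8 / π ^ 3) * Real.sqrt D * (2 ^ (D + 2) * π))
        / (2 ^ (D + 2) * π ^ (2 * D + 1)) := by
    field_simp
    ring
  rw [hLHS, hRHS]
  apply (div_lt_div_iff_of_pos_right hden).mpr
  calc (D : ℝ) * C = Real.sqrt D * (Real.sqrt D * C) := by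
        rw [← mul_assoc, Real.mul_self_sqrt hDpos.le]
    _ ≤ Real.sqrt D * 2 ^ D := by
        exact mul_le_mul_of_nonneg_left hsqrt hsD.le
    _ = Real.sqrt D * 2 ^ D * 1 := by ring
    _ < Real.sqrt D * 2 ^ D * (Real.sqrt (8 / π ^ 3) * (4 * π)) := by
        apply mul_lt_mul_of_pos_left hone (by positivity)
    _ = Real.sqrt (8 / π ^ 3) * Real.sqrt D * (2 ^ (D + 2) * π) := by
        rw [pow_add]
        ring
end

section
/- Let X be a topological space, φ : ℝ × X → X a continuous flow (φ_0 = id and φ_{s+t} = φ_s ∘ φ_t for all s, t ∈ ℝ), f : X → ℂ a bounded continuous function, and ω ∈ ℝ. Fix x ∈ X and suppose (1/T) ∫_0^T e^{i2πωτ} f(φ_τ(x)) dτ converges to a limit L ∈ ℂ as T → ∞. Then for every t ∈ ℝ, (1/T) ∫_0^T e^{i2πωτ} f(φ_τ(φ_t(x))) dτ converges to e^{-i2πωt} L as T → ∞. That is, the harmonic average f̃^{(ω)} satisfies U_t f̃^{(ω)} = e^{-i2πωt} f̃^{(ω)} along the orbit of x. -/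
open Filter intervalIntegral
open scoped Topology

/-!
Write `g τ = e^{i2πωτ} f(φ_τ x)`. By the flow property the integrand started at `φ_t x` is
`e^{-i2πωt} g(τ + t)`, so its average over `[0, T]` is `e^{-i2πωt}` times the average of `g`
over `[t, T + t]`. That differs from `(T + t)/T` times the average of `g` over `[0, T + t]`
by `T⁻¹ ∫_0^t g`, which tends to `0`.
-/

section CesaroAverage

variable {E : Type*} [NormedAddCommGroup E] [NormedSpace ℝ E]

theorem tendsto_inv_smul_comp_add_const {F : ℝ → E} {L : E}
    (hF : Tendsto (fun T => T⁻¹ • F T) atTop (𝓝 L)) (t : ℝ) :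
    Tendsto (fun T => T⁻¹ • F (T + t)) atTop (𝓝 L) := by
  have hratio : Tendsto (fun T : ℝ => 1 + t * T⁻¹) atTop (𝓝 1) := by
    simpa using tendsto_const_nhds.add (tendsto_inv_atTop_zero.const_mul t)
  have hshifted := hF.comp (tendsto_atTop_add_const_right _ t tendsto_id)
  refine (one_smul ℝ L ▸ hratio.smul hshifted).congr' ?_
  filter_upwards [eventually_gt_atTop 0, eventually_gt_atTop (-t)] with T hT hTt
  have hT_ne : T + t ≠ 0 := by linarith
  rw [Function.comp_apply, id, smul_smul]
  congr 1
  field_simp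

theorem tendsto_inv_smul_sub_const {F : ℝ → E} {L : E}
    (hF : Tendsto (fun T => T⁻¹ • F T) atTop (𝓝 L)) (c : E) :
    Tendsto (fun T => T⁻¹ • (F T - c)) atTop (𝓝 L) := by
  simpa [smul_sub] using hF.sub (tendsto_inv_atTop_zero.smul_const c)

theorem tendsto_inv_smul_integral_comp_add_right {g : ℝ → E}
    (hg : ∀ a b, IntervalIntegrable g MeasureTheory.volume a b) {L : E}
    (hL : Tendsto (fun T => T⁻¹ • ∫ τ in (0 : ℝ)..T, g τ) atTop (𝓝 L)) (t : ℝ) :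
    Tendsto (fun T => T⁻¹ • ∫ τ in (0 : ℝ)..T, g (τ + t)) atTop (𝓝 L) := by
  have hsplit : ∀ T : ℝ,
      ∫ τ in (0 : ℝ)..T, g (τ + t) = (∫ τ in (0 : ℝ)..(T + t), g τ) - ∫ τ in (0 : ℝ)..t, g τ := by
    intro T
    rw [integral_comp_add_right, zero_add, integral_interval_sub_left (hg _ _) (hg _ _)]
  simp_rw [hsplit]
  exact tendsto_inv_smul_sub_const (tendsto_inv_smul_comp_add_const hL t) _

end CesaroAverage

theorem Complex.tendsto_inv_mul_integral_comp_add_right {g : ℝ → ℂ}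
    (hg : ∀ a b, IntervalIntegrable g MeasureTheory.volume a b)
    {L : ℂ} (hL : Tendsto (fun T : ℝ => (T : ℂ)⁻¹ * ∫ τ in (0 : ℝ)..T, g τ) atTop (𝓝 L))
    (t : ℝ) :
    Tendsto (fun T : ℝ => (T : ℂ)⁻¹ * ∫ τ in (0 : ℝ)..T, g (τ + t)) atTop (𝓝 L) := by
  simp only [← Complex.ofReal_inv, ← Complex.real_smul] at hL ⊢
  exact tendsto_inv_smul_integral_comp_add_right hg hL t

theorem harmonic_average_koopman_eigenfunction_flow_general
    {X : Type*} [TopologicalSpace X] (φ : ℝ → X → X)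
    (hφcont : Continuous fun p : ℝ × X => φ p.1 p.2)
    (hφadd : ∀ s t : ℝ, φ (s + t) = φ s ∘ φ t)
    (f : X → ℂ) (hfcont : Continuous f)
    (ω : ℝ) (x : X) (L : ℂ)
    (hconv : Tendsto (fun T : ℝ => ((T : ℂ))⁻¹ *
        ∫ τ in (0 : ℝ)..T,
          Complex.exp (Complex.I * (2 * (Real.pi : ℂ) * (ω : ℂ) * (τ : ℂ))) * f (φ τ x))
      atTop (𝓝 L)) :
    ∀ t : ℝ,
      Tendsto (fun T : ℝ => ((T : ℂ))⁻¹ *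
          ∫ τ in (0 : ℝ)..T,
            Complex.exp (Complex.I * (2 * (Real.pi : ℂ) * (ω : ℂ) * (τ : ℂ))) * f (φ τ (φ t x)))
        atTop (𝓝 (Complex.exp (-(Complex.I * (2 * (Real.pi : ℂ) * (ω : ℂ) * (t : ℂ)))) * L)) := by
  intro t
  set θ : ℂ := 2 * (Real.pi : ℂ) * (ω : ℂ)
  set g : ℝ → ℂ := fun τ => Complex.exp (Complex.I * (θ * τ)) * f (φ τ x)
  have hg : Continuous g := by fun_prop
  have hintegrand : ∀ τ : ℝ, Complex.exp (Complex.I * (θ * τ)) * f (φ τ (φ t x)) =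
      Complex.exp (-(Complex.I * (θ * t))) * g (τ + t) := by
    intro τ
    simp only [g, hφadd, Function.comp_apply, ← mul_assoc, ← Complex.exp_add]
    congr 2
    push_cast
    ring
  simp_rw [hintegrand, integral_const_mul, mul_left_comm _ (Complex.exp _)]
  exact (Complex.tendsto_inv_mul_integral_comp_add_right hg.intervalIntegrable hconv t).const_mul _

/-- for a continuous flow `φ_t` and a bounded continuous observable `f`, if
the harmonic average at frequency `ω` converges along the orbit of `x` to `L`, then
starting from `φ_t(x)` it converges to `e^{-i2πωt} L`; i.e.
`U_t f̃^{(ω)} = e^{-i2πωt} f̃^{(ω)}` along the orbit of `x`. -/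
theorem harmonic_average_koopman_eigenfunction_flow
    {X : Type*} [TopologicalSpace X] (φ : ℝ → X → X)
    (hφcont : Continuous fun p : ℝ × X => φ p.1 p.2)
    (hφ0 : φ 0 = id) (hφadd : ∀ s t : ℝ, φ (s + t) = φ s ∘ φ t)
    (f : X → ℂ) (hfcont : Continuous f) (B : ℝ) (hfbdd : ∀ x, ‖f x‖ ≤ B)
    (ω : ℝ) (x : X) (L : ℂ)
    (hconv : Tendsto (fun T : ℝ => ((T : ℂ))⁻¹ *
        ∫ τ in (0 : ℝ)..T,
          Complex.exp (Complex.I * (2 * (Real.pi : ℂ) * (ω : ℂ) * (τ : ℂ))) * f (φ τ x))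
      atTop (𝓝 L)) :
    ∀ t : ℝ,
      Tendsto (fun T : ℝ => ((T : ℂ))⁻¹ *
          ∫ τ in (0 : ℝ)..T,
            Complex.exp (Complex.I * (2 * (Real.pi : ℂ) * (ω : ℂ) * (τ : ℂ))) * f (φ τ (φ t x)))
        atTop (𝓝 (Complex.exp (-(Complex.I * (2 * (Real.pi : ℂ) * (ω : ℂ) * (t : ℂ)))) * L)) :=
  harmonic_average_koopman_eigenfunction_flow_general φ hφcont hφadd f hfcont ω x L hconv
end
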